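/- Let (a,b) be positive integers and let S(a,b) = (r_1, ..., r_n) be the sequence obtained from the Euclidean algorithm of (a,b) (each remainder x_i repeated q_i times, where q_i are the quotients). Then the sum of the squares of the terms of S(a,b) equals a·b. -/

import Mathlib

/-- The Euclidean-algorithm sequence `S(a,b)` of a pair of positive integers:
with `x₀ = b`, `x₁ = a`, each remainder `xᵢ` is repeated `qᵢ` times, where the
`qᵢ` are the quotients of the Euclidean algorithm. -/
def euclidSeq : ℕ → ℕ → List ℕ
  | a, b =>
    if h : a = 0 then []
    else
      have : b % a < a := Nat.mod_lt _ (Nat.pos_of_ne_zero h)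
      List.replicate (b / a) a ++ euclidSeq (b % a) a
  termination_by a _ => a

@[simp]
theorem euclidSeq_zero_left (b : ℕ) : euclidSeq 0 b = [] := by
  rw [euclidSeq, dif_pos rfl]

theorem euclidSeq_of_pos {a : ℕ} (b : ℕ) (ha : 0 < a) :
    euclidSeq a b = List.replicate (b / a) a ++ euclidSeq (b % a) a := by
  rw [euclidSeq, dif_neg ha.ne']

theorem euclidSeq_sum_sq_general (a b : ℕ) :
    ((euclidSeq a b).map (fun r => r ^ 2)).sum = a * b := by
  induction a using Nat.strong_induction_on generalizing b with
  | _ a ih =>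
  rcases Nat.eq_zero_or_pos a with rfl | ha
  · simp
  · rw [euclidSeq_of_pos b ha, List.map_append, List.sum_append, List.map_replicate,
      List.sum_replicate, smul_eq_mul, ih (b % a) (Nat.mod_lt b ha)]
    calc b / a * a ^ 2 + b % a * a = a * (a * (b / a) + b % a) := by ring
      _ = a * b := by rw [Nat.div_add_mod]

/-- The sum of the squares of the terms of the sequence `S(a,b)` obtained from
the Euclidean algorithm of positive integers `(a,b)` equals `a * b`. -/
theorem euclidSeq_sum_sq (a b : ℕ) (ha : 0 < a) (hb : 0 < b) :
    ((euclidSeq a b).map (fun r => r ^ 2)).sum = a * b :=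
  euclidSeq_sum_sq_general a b
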